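/- Let P > 0 and let λ, k, γ, ν, Ĉ, D̂ be real numbers. Suppose u : ℝ → ℝ is twice continuously differentiable, periodic with period 2P, and satisfies for all θ ∈ ℝ both λk²u''(θ) = (γ/3)u(θ)³ − (ν/2)u(θ)² + Ĉ and (λk²/2)u'(θ)² = (γ/12)u(θ)⁴ − (ν/6)u(θ)³ + Ĉu(θ) + D̂. Then 18λk²⟨(u')²⟩ = −ν⟨u³⟩ + 18Ĉ⟨u⟩ + 24D̂, where ⟨f⟩ = (1/(2P))∫₀^{2P} f(θ)dθ. -/

import Mathlib

/-!
Subtracting `u` times the Gardner equation from four times its first integral eliminates the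
quartic term and leaves `u u''`, which is the exact derivative `(u u')' - u'²`. Integrated over a
period, the derivative of the periodic function `u u'` contributes nothing.
-/

open intervalIntegral

theorem Function.Periodic.deriv {f : ℝ → ℝ} {c : ℝ} (h : Function.Periodic f c) :
    Function.Periodic (deriv f) c := fun x => by
  rw [← deriv_comp_add_const, h.funext]

theorem integral_eq_zero_of_hasDerivAt_of_periodic {E : Type*} [NormedAddCommGroup E]
    [NormedSpace ℝ E] [CompleteSpace E] {F f : ℝ → E} {a T : ℝ}
    (hF : ∀ x, HasDerivAt F (f x) x) (hf : IntervalIntegrable f MeasureTheory.volume a (a + T))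
    (hper : Function.Periodic F T) : ∫ x in a..a + T, f x = 0 := by
  rw [integral_eq_sub_of_hasDerivAt (fun x _ => hF x) hf, hper a, sub_self]

theorem hasDerivAt_mul_deriv {u : ℝ → ℝ} (hu : ContDiff ℝ 2 u) (x : ℝ) :
    HasDerivAt (fun y => u y * deriv u y) (deriv u x ^ 2 + u x * iteratedDeriv 2 u x) x := by
  have hu' : ContDiff ℝ 1 (deriv u) := hu.iterate_deriv' 1 1
  rw [iteratedDeriv_succ, iteratedDeriv_one, sq]
  exact (hu.differentiable two_ne_zero x).hasDerivAt.mul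
    (hu'.differentiable one_ne_zero x).hasDerivAt

/-- `18λk²⟨(u')²⟩ = -ν⟨u³⟩ + 18Ĉ⟨u⟩ + 24D̂` for a 2P-periodic solution of the
once-integrated steady Gardner equation and its first integral. -/
theorem mean_identity_uprime_sq
    (P lam k γ ν C D : ℝ) (hP : 0 < P)
    (u : ℝ → ℝ) (hu : ContDiff ℝ 2 u)
    (hper : Function.Periodic u (2 * P))
    (heq1 : ∀ θ : ℝ, lam * k ^ 2 * iteratedDeriv 2 u θ
      = (γ / 3) * (u θ) ^ 3 - (ν / 2) * (u θ) ^ 2 + C)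
    (heq2 : ∀ θ : ℝ, (lam * k ^ 2 / 2) * (deriv u θ) ^ 2
      = (γ / 12) * (u θ) ^ 4 - (ν / 6) * (u θ) ^ 3 + C * u θ + D) :
    18 * lam * k ^ 2 * ((1 / (2 * P)) * ∫ θ in (0:ℝ)..(2 * P), (deriv u θ) ^ 2)
      = -ν * ((1 / (2 * P)) * ∫ θ in (0:ℝ)..(2 * P), (u θ) ^ 3)
        + 18 * C * ((1 / (2 * P)) * ∫ θ in (0:ℝ)..(2 * P), u θ)
        + 24 * D := by
  have hu0 : Continuous u := hu.continuous
  have hu1 : Continuous (deriv u) := hu.continuous_deriv one_le_two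
  have hu2 : Continuous (iteratedDeriv 2 u) := hu.continuous_iteratedDeriv 2 le_rfl
  have hii : ∀ f : ℝ → ℝ, Continuous f → IntervalIntegrable f MeasureTheory.volume 0 (2 * P) :=
    fun f hf => hf.intervalIntegrable _ _
  have hpointwise : ∀ θ, 18 * lam * k ^ 2 * deriv u θ ^ 2 = -ν * u θ ^ 3 + 18 * C * u θ + 24 * D
      + 6 * lam * k ^ 2 * (deriv u θ ^ 2 + u θ * iteratedDeriv 2 u θ) := fun θ => by
    linear_combination 24 * heq2 θ - 6 * u θ * heq1 θ
  have hexact : ∫ θ in (0:ℝ)..2 * P, deriv u θ ^ 2 + u θ * iteratedDeriv 2 u θ = 0 := by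
    simpa using integral_eq_zero_of_hasDerivAt_of_periodic (a := 0) (hasDerivAt_mul_deriv hu)
      (by simpa using hii _ (by fun_prop)) (hper.mul hper.deriv)
  have hint := integral_congr (μ := MeasureTheory.volume) (a := 0) (b := 2 * P)
    fun θ _ => hpointwise θ
  rw [integral_add (hii _ (by fun_prop)) (hii _ (by fun_prop)),
    integral_add (hii _ (by fun_prop)) (hii _ (by fun_prop)),
    integral_add (hii _ (by fun_prop)) (hii _ (by fun_prop))] at hint
  simp only [integral_const_mul, integral_const, smul_eq_mul, hexact] at hint
  field_simp
  linear_combination hint
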